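/- arXiv:2002.10572 — 3 statements merged into one kernel-verified Lean document; each statement's English description precedes it below -/
import Mathlib

section
/- Let f: (0,1) → ℝ be the quantile function of a real distribution Z, and for Q ∈ ℕ⁺ let the Q-quantile projection of Z be the discrete distribution with quantile function taking the constant value f((2i-1)/(2Q)) on each interval ((i-1)/Q, i/Q], for i = 1,…,Q. If f is monotone nondecreasing and takes values in [0, θ̄], then the 1-Wasserstein distance between Z and its Q-quantile projection is at most θ̄/(2Q). -/
open MeasureTheory Set

/-- If `f : (0,1) → ℝ` is a monotone nondecreasing quantile function with
values in `[0, θ̄]`, and `g` is the quantile function of the Q-quantile projection,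
taking the constant value `f((2i-1)/(2Q))` on each interval `((i-1)/Q, i/Q]`, then the
1-Wasserstein distance `∫₀¹ |f - g|` is at most `θ̄/(2Q)`. -/
theorem stmt1_quantile_projection_error
    (Q : ℕ) (hQ : 1 ≤ Q) (θbar : ℝ) (hθ : 0 ≤ θbar)
    (f g : ℝ → ℝ)
    (hmono : MonotoneOn f (Ioo (0:ℝ) 1))
    (hrange : ∀ ω ∈ Ioo (0:ℝ) 1, f ω ∈ Icc 0 θbar)
    (hg : ∀ i : Fin Q, ∀ ω ∈ Ioc ((i : ℝ) / Q) (((i : ℝ) + 1) / Q),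
      g ω = f ((2 * ((i : ℝ) + 1) - 1) / (2 * Q))) :
    (∫ ω in Ioo (0:ℝ) 1, |f ω - g ω|) ≤ θbar / (2 * Q) := by
  have hQ0 : (0:ℝ) < Q := by exact_mod_cast hQ
  set F : ℝ → ℝ := fun x => if x ≤ 0 then 0 else if 1 ≤ x then θbar else f x with hF
  have hFval : ∀ x ∈ Ioo (0:ℝ) 1, F x = f x := by
    intro x hx
    simp only [hF]
    rw [if_neg (by linarith [hx.1]), if_neg (by linarith [hx.2])]
  have hFmem : ∀ x, F x ∈ Icc 0 θbar := by
    intro x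
    simp only [hF]
    split_ifs with h1 h2
    · exact ⟨le_refl 0, hθ⟩
    · exact ⟨hθ, le_refl _⟩
    · exact hrange x ⟨lt_of_not_ge h1, lt_of_not_ge h2⟩
  have hFmono : Monotone F := by
    intro x y hxy
    simp only [hF]
    split_ifs <;>
      first
        | rfl
        | exact hθ
        | linarith
        | exact (hrange _ ⟨by linarith, by linarith⟩).1
        | exact (hrange _ ⟨by linarith, by linarith⟩).2
        | exact hmono ⟨by linarith, by linarith⟩ ⟨by linarith, by linarith⟩ hxy
  set a : ℕ → ℝ := fun i => (i : ℝ) / Q with ha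
  set m : ℕ → ℝ := fun i => (2 * (i:ℝ) + 1) / (2 * Q) with hm
  have hhalf : (0:ℝ) < 1/(2*(Q:ℝ)) := by positivity
  have hlen1 : ∀ i : ℕ, m i - a i = 1/(2*(Q:ℝ)) := by
    intro i
    simp only [ha, hm]
    field_simp
    ring
  have hlen2 : ∀ i : ℕ, a (i+1) - m i = 1/(2*(Q:ℝ)) := by
    intro i
    simp only [ha, hm]
    push_cast
    field_simp
    ring
  have ham1 : ∀ i : ℕ, a i ≤ m i := by
    intro i
    linarith [hlen1 i]
  have ham2 : ∀ i : ℕ, m i ≤ a (i+1) := by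
    intro i
    linarith [hlen2 i]
  have hiF : ∀ u v : ℝ, IntervalIntegrable F volume u v := fun u v =>
    hFmono.intervalIntegrable
  have habs : ∀ c u v : ℝ, IntervalIntegrable (fun x => |F x - c|) volume u v := by
    intro c u v
    have hmc : Monotone (fun x => F x - c) := fun x y hxy =>
      sub_le_sub_right (hFmono hxy) c
    exact hmc.intervalIntegrable.abs
  set L : ℕ → ℝ := fun i => ∫ x in a i..m i, F x with hL
  set R : ℕ → ℝ := fun i => ∫ x in m i..a (i+1), F x with hR
  -- per-interval identity
  have hstep : ∀ i : ℕ, (∫ x in a i..a (i+1), |F x - F (m i)|) = R i - L i := by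
    intro i
    have c1 : EqOn (fun x => |F x - F (m i)|) (fun x => F (m i) - F x)
        (uIcc (a i) (m i)) := by
      intro x hx
      rw [uIcc_of_le (ham1 i)] at hx
      have hle : F x ≤ F (m i) := hFmono hx.2
      simp only
      rw [abs_of_nonpos (by linarith)]
      ring
    have c2 : EqOn (fun x => |F x - F (m i)|) (fun x => F x - F (m i))
        (uIcc (m i) (a (i+1))) := by
      intro x hx
      rw [uIcc_of_le (ham2 i)] at hx
      have hle : F (m i) ≤ F x := hFmono hx.1
      simp only
      rw [abs_of_nonneg (by linarith)]
    have e1 : (∫ x in a i..m i, |F x - F (m i)|) = (m i - a i) * F (m i) - L i := by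
      rw [intervalIntegral.integral_congr c1,
        intervalIntegral.integral_sub intervalIntegrable_const (hiF _ _),
        intervalIntegral.integral_const, smul_eq_mul, hL]
    have e2 : (∫ x in m i..a (i+1), |F x - F (m i)|)
        = R i - (a (i+1) - m i) * F (m i) := by
      rw [intervalIntegral.integral_congr c2,
        intervalIntegral.integral_sub (hiF _ _) intervalIntegrable_const,
        intervalIntegral.integral_const, smul_eq_mul, hR]
    rw [← intervalIntegral.integral_add_adjacent_intervals (habs _ _ _) (habs _ _ _),
      e1, e2, hlen1 i, hlen2 i]
    ring
  -- translation step
  have hRL : ∀ i : ℕ, R i ≤ L (i+1) := by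
    intro i
    have hcomp : Monotone (fun x => F (x + 1/(2*(Q:ℝ)))) :=
      hFmono.comp (fun x y hxy => by linarith : Monotone (fun x : ℝ => x + 1/(2*(Q:ℝ))))
    have e : (∫ x in m i..a (i+1), F (x + 1/(2*(Q:ℝ)))) = L (i+1) := by
      rw [intervalIntegral.integral_comp_add_right, hL]
      have e1 : m i + 1/(2*(Q:ℝ)) = a (i+1) := by linarith [hlen2 i]
      have e2 : a (i+1) + 1/(2*(Q:ℝ)) = m (i+1) := by linarith [hlen1 (i+1)]
      rw [e1, e2]
    calc R i ≤ ∫ x in m i..a (i+1), F (x + 1/(2*(Q:ℝ))) := by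
          refine intervalIntegral.integral_mono_on (ham2 i) (hiF _ _)
            hcomp.intervalIntegrable (fun x _ => hFmono ?_)
          linarith
      _ = L (i+1) := e
  have haQ : a Q = 1 := by
    simp only [ha]
    field_simp
  have hLQ : L Q = θbar / (2*(Q:ℝ)) := by
    have cQ : EqOn (fun x => F x) (fun _ => θbar) (uIcc (a Q) (m Q)) := by
      intro x hx
      rw [uIcc_of_le (ham1 Q)] at hx
      have hx1 : (1:ℝ) ≤ x := by
        rw [← haQ]
        exact hx.1
      simp only [hF]
      rw [if_neg (by linarith), if_pos hx1]
    rw [hL]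
    simp only
    rw [intervalIntegral.integral_congr cQ, intervalIntegral.integral_const,
      smul_eq_mul, hlen1 Q]
    ring
  have hL0 : 0 ≤ L 0 :=
    intervalIntegral.integral_nonneg (ham1 0) (fun x _ => (hFmem x).1)
  -- a.e. congruence on each piece
  have hc : ∀ i : ℕ, i < Q →
      (fun x => |f x - g x|) =ᵐ[volume.restrict (Ioc (a i) (a (i+1)))]
      (fun x => |F x - F (m i)|) := by
    intro i hi
    have hne : ∀ᵐ x : ℝ ∂volume, x ≠ 1 := by
      rw [ae_iff]
      have h1 : {x : ℝ | ¬x ≠ 1} = {1} := by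
        ext x
        simp
      rw [h1]
      exact Real.volume_singleton
    filter_upwards [ae_restrict_mem measurableSet_Ioc, ae_restrict_of_ae hne]
      with x hx hx1
    have hai : (0:ℝ) ≤ a i := by
      simp only [ha]
      positivity
    have hub : a (i+1) ≤ 1 := by
      simp only [ha]
      rw [div_le_one hQ0]
      exact_mod_cast Nat.succ_le_of_lt hi
    have hx01 : x ∈ Ioo (0:ℝ) 1 := ⟨lt_of_le_of_lt hai hx.1,
      lt_of_le_of_ne (le_trans hx.2 hub) hx1⟩
    have hmi : m i ∈ Ioo (0:ℝ) 1 := by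
      constructor
      · simp only [hm]
        positivity
      · simp only [hm]
        rw [div_lt_one (by positivity)]
        have : (i:ℝ) + 1 ≤ Q := by exact_mod_cast Nat.succ_le_of_lt hi
        linarith
    have hgx := hg ⟨i, hi⟩ x (by
      simp only [ha] at hx
      push_cast at hx ⊢
      simpa using hx)
    have hmeq' : (2 * ((((⟨i, hi⟩ : Fin Q) : ℕ) : ℝ) + 1) - 1) / (2 * (Q:ℝ)) = m i := by
      simp only [hm, Fin.val_mk]
      ring
    rw [hgx, hmeq', hFval x hx01, hFval (m i) hmi]
  -- integrability of |f - g| on each piece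
  have hifg : ∀ i : ℕ, i < Q →
      IntervalIntegrable (fun x => |f x - g x|) volume (a i) (a (i+1)) := by
    intro i hi
    have hle : a i ≤ a (i+1) := le_trans (ham1 i) (ham2 i)
    rw [intervalIntegrable_iff_integrableOn_Ioc_of_le hle]
    exact ((intervalIntegrable_iff_integrableOn_Ioc_of_le hle).1
      (habs (F (m i)) (a i) (a (i+1)))).congr (hc i hi).symm
  -- assemble
  have hsum : (∫ ω in Ioo (0:ℝ) 1, |f ω - g ω|) =
      ∑ i ∈ Finset.range Q, ∫ x in a i..a (i+1), |f x - g x| := by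
    rw [← MeasureTheory.integral_Ioc_eq_integral_Ioo,
      intervalIntegral.sum_integral_adjacent_intervals (fun k hk => hifg k hk)]
    have h0 : a 0 = 0 := by simp [ha]
    rw [h0, haQ, intervalIntegral.integral_of_le zero_le_one]
  have hpc : ∀ i ∈ Finset.range Q,
      (∫ x in a i..a (i+1), |f x - g x|) = R i - L i := by
    intro i hi
    rw [← hstep i]
    refine intervalIntegral.integral_congr_ae' ?_ ?_
    · exact (ae_restrict_iff' measurableSet_Ioc).1 (hc i (Finset.mem_range.1 hi))
    · refine Filter.Eventually.of_forall fun x hx => ?_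
      exact absurd (lt_of_lt_of_le hx.1 hx.2)
        (not_lt.2 (le_trans (ham1 i) (ham2 i)))
  rw [hsum, Finset.sum_congr rfl hpc]
  calc ∑ i ∈ Finset.range Q, (R i - L i)
      ≤ ∑ i ∈ Finset.range Q, (L (i+1) - L i) :=
        Finset.sum_le_sum fun i _ => by linarith [hRL i]
    _ = L Q - L 0 := Finset.sum_range_sub L Q
    _ ≤ θbar / (2 * (Q:ℝ)) := by
        rw [hLQ]
        linarith
end

section
/- For any α̂ > 0 and complex a with b > 0: α̂ |a|²/b = max over λ ∈ ℂ of [2√α̂ Re(λ̄ a) − |λ|² b]. Hence the multiple-ratio objective Σ_k α̂_k |a_k|²/b_k equals the maximum over (λ_1,…,λ_K) ∈ ℂ^K of Σ_k [2√α̂_k Re(λ̄_k a_k) − |λ_k|² b_k]. -/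
open Complex

lemma aux_val (α' b' : ℝ) (a' : ℂ) (hα : 0 < α') (hb : 0 < b') :
    (fun lam : ℂ =>
      2 * Real.sqrt α' * ((starRingEnd ℂ lam) * a').re - ‖lam‖ ^ 2 * b')
      (((Real.sqrt α' / b' : ℝ) : ℂ) * a') = α' * ‖a'‖ ^ 2 / b' := by
  have hs : Real.sqrt α' * Real.sqrt α' = α' := Real.mul_self_sqrt hα.le
  have h1 : ((starRingEnd ℂ (((Real.sqrt α' / b' : ℝ) : ℂ) * a')) * a').re
      = (Real.sqrt α' / b') * ‖a'‖ ^ 2 := by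
    rw [map_mul, Complex.conj_ofReal]
    have h0 : (starRingEnd ℂ a') * a' = ((‖a'‖ ^ 2 : ℝ) : ℂ) := by
      rw [mul_comm, Complex.mul_conj, Complex.normSq_eq_norm_sq]
    rw [mul_assoc, h0, ← Complex.ofReal_mul, Complex.ofReal_re]
  have h2 : ‖(((Real.sqrt α' / b' : ℝ) : ℂ) * a')‖ ^ 2
      = (Real.sqrt α' / b') ^ 2 * ‖a'‖ ^ 2 := by
    rw [norm_mul, Complex.norm_real, mul_pow, Real.norm_eq_abs, _root_.sq_abs]
  simp only [h1, h2]
  field_simp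
  ring_nf
  rw [Real.sq_sqrt hα.le]
  ring

lemma aux_le (α' b' : ℝ) (a' : ℂ) (hα : 0 < α') (hb : 0 < b') (lam : ℂ) :
    2 * Real.sqrt α' * ((starRingEnd ℂ lam) * a').re - ‖lam‖ ^ 2 * b'
      ≤ α' * ‖a'‖ ^ 2 / b' := by
  have hre : ((starRingEnd ℂ lam) * a').re ≤ ‖lam‖ * ‖a'‖ := by
    calc ((starRingEnd ℂ lam) * a').re ≤ ‖(starRingEnd ℂ lam) * a'‖ :=
          Complex.re_le_norm _
      _ = ‖lam‖ * ‖a'‖ := by rw [norm_mul, RCLike.norm_conj]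
  rw [sub_le_iff_le_add, div_add' _ _ _ hb.ne', le_div_iff₀ hb]
  have hs : Real.sqrt α' * Real.sqrt α' = α' := Real.mul_self_sqrt hα.le
  nlinarith [sq_nonneg (b' * ‖lam‖ - Real.sqrt α' * ‖a'‖), Real.sqrt_nonneg α',
    norm_nonneg lam, norm_nonneg a',
    mul_le_mul_of_nonneg_left hre
      (by positivity : (0:ℝ) ≤ 2 * Real.sqrt α' * b')]

lemma aux_single (α' b' : ℝ) (a' : ℂ) (hα : 0 < α') (hb : 0 < b') :
    IsGreatest
      (Set.range fun lam : ℂ =>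
        2 * Real.sqrt α' * ((starRingEnd ℂ lam) * a').re - ‖lam‖ ^ 2 * b')
      (α' * ‖a'‖ ^ 2 / b') := by
  constructor
  · exact ⟨((Real.sqrt α' / b' : ℝ) : ℂ) * a', aux_val α' b' a' hα hb⟩
  · rintro x ⟨lam, rfl⟩
    exact aux_le α' b' a' hα hb lam

/-- The quadratic transform identity: for `α̂ > 0`, `b > 0` and `a ∈ ℂ`,
`α̂|a|²/b = max_{λ∈ℂ} [2√α̂ Re(λ̄ a) − |λ|² b]`, and therefore the multiple-ratio
objective `Σ_k α̂_k |a_k|²/b_k` equals the maximum over `(λ_1,…,λ_K) ∈ ℂ^K` of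
`Σ_k [2√α̂_k Re(λ̄_k a_k) − |λ_k|² b_k]`. -/
theorem stmt8_quadratic_transform_identity
    (K : ℕ) (αh b : Fin K → ℝ) (a : Fin K → ℂ)
    (hα : ∀ k, 0 < αh k) (hb : ∀ k, 0 < b k) :
    (∀ (α' b' : ℝ) (a' : ℂ), 0 < α' → 0 < b' →
      IsGreatest
        (Set.range fun lam : ℂ =>
          2 * Real.sqrt α' * ((starRingEnd ℂ lam) * a').re - ‖lam‖ ^ 2 * b')
        (α' * ‖a'‖ ^ 2 / b')) ∧
    IsGreatest
      (Set.range fun lam : Fin K → ℂ =>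
        ∑ k, (2 * Real.sqrt (αh k) * ((starRingEnd ℂ (lam k)) * a k).re
          - ‖lam k‖ ^ 2 * b k))
      (∑ k, αh k * ‖a k‖ ^ 2 / b k) := by
  refine ⟨fun α' b' a' hα' hb' => aux_single α' b' a' hα' hb', ?_, ?_⟩
  · refine ⟨fun k => ((Real.sqrt (αh k) / b k : ℝ) : ℂ) * a k, ?_⟩
    exact Finset.sum_congr rfl fun k _ => aux_val (αh k) (b k) (a k) (hα k) (hb k)
  · rintro x ⟨lam, rfl⟩
    exact Finset.sum_le_sum fun k _ => aux_le (αh k) (b k) (a k) (hα k) (hb k) (lam k)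
end

section
/- For γ ∈ (0,1) and any two maps Z_1, Z_2 from a finite set S×A to probability distributions on ℝ with finite first moments, if (T^π Z)(s,a) is the distribution of r(s,a) + γ Z(s',a') where (s',a') is sampled according to fixed transition and policy kernels independent of Z, then d̄_1(T^π Z_1, T^π Z_2) ≤ γ d̄_1(Z_1, Z_2). -/
open MeasureTheory ENNReal

/-- The 1-Wasserstein distance between two probability measures on ℝ, defined as the
infimum of `∫ |x - y| dπ` over couplings `π`. -/
noncomputable def W1 (μ ν : MeasureTheory.Measure ℝ) : ℝ :=
  sInf { x | ∃ π : MeasureTheory.Measure (ℝ × ℝ), IsProbabilityMeasure π ∧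
    π.map Prod.fst = μ ∧ π.map Prod.snd = ν ∧ x = ∫ p, |p.1 - p.2| ∂π }

private lemma map_finset_sum' {α β ι : Type*} [MeasurableSpace α] [MeasurableSpace β]
    (s : Finset ι) (μ : ι → Measure α) {f : α → β} (hf : Measurable f) :
    (∑ i ∈ s, μ i).map f = ∑ i ∈ s, (μ i).map f := by
  classical
  induction s using Finset.induction with
  | empty => simp
  | insert _ _ h ih => simp [Finset.sum_insert h, Measure.map_add _ _ hf, ih]

private lemma W1_bddBelow (μ ν : Measure ℝ) :
    BddBelow { x | ∃ π : Measure (ℝ × ℝ), IsProbabilityMeasure π ∧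
      π.map Prod.fst = μ ∧ π.map Prod.snd = ν ∧ x = ∫ p, |p.1 - p.2| ∂π } := by
  refine ⟨0, fun x hx => ?_⟩
  obtain ⟨π, _, _, _, rfl⟩ := hx
  exact integral_nonneg fun p => abs_nonneg _

/-- Over a finite state-action space, the distributional Bellman operator
`(T^π Z)(s,a) = law of r(s,a) + γ Z(s',a')`, with `(s',a')` drawn from a fixed
transition/policy kernel `p` independent of `Z`, is a `γ`-contraction in the maximal
1-Wasserstein metric `d̄₁(Z₁,Z₂) = sup_{(s,a)} W₁(Z₁(s,a), Z₂(s,a))`. -/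
theorem stmt16_distributional_bellman_gamma_contraction
    {SA : Type*} [Fintype SA] [Nonempty SA]
    (γ : ℝ) (hγ0 : 0 < γ) (hγ1 : γ < 1)
    (r : SA → ℝ)
    (p : SA → SA → ℝ≥0∞) (hp : ∀ sa, ∑ sa', p sa sa' = 1)
    (T : (SA → MeasureTheory.Measure ℝ) → SA → MeasureTheory.Measure ℝ)
    (hT : ∀ Z sa, T Z sa = ∑ sa', (p sa sa') • (Z sa').map (fun x => r sa + γ * x))
    (Z₁ Z₂ : SA → MeasureTheory.Measure ℝ)
    (h1 : ∀ sa, IsProbabilityMeasure (Z₁ sa)) (h2 : ∀ sa, IsProbabilityMeasure (Z₂ sa))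
    (hm1 : ∀ sa, Integrable (fun x : ℝ => x) (Z₁ sa))
    (hm2 : ∀ sa, Integrable (fun x : ℝ => x) (Z₂ sa)) :
    (⨆ sa, W1 (T Z₁ sa) (T Z₂ sa)) ≤ γ * ⨆ sa, W1 (Z₁ sa) (Z₂ sa) := by
  classical
  set D := ⨆ sa, W1 (Z₁ sa) (Z₂ sa) with hDdef
  have hbdd : BddAbove (Set.range fun sa => W1 (Z₁ sa) (Z₂ sa)) :=
    Set.Finite.bddAbove (Set.finite_range _)
  have hWD : ∀ sa, W1 (Z₁ sa) (Z₂ sa) ≤ D := fun sa => le_ciSup hbdd sa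
  -- p values are finite and sum to 1 in ℝ
  have hple : ∀ sa sa', p sa sa' ≤ 1 := fun sa sa' => by
    rw [← hp sa]; exact Finset.single_le_sum (fun i _ => zero_le) (Finset.mem_univ sa')
  have hpfin : ∀ sa sa', p sa sa' ≠ ∞ := fun sa sa' => ne_top_of_le_ne_top one_ne_top (hple sa sa')
  have hpsum : ∀ sa, ∑ sa', (p sa sa').toReal = 1 := fun sa => by
    rw [← ENNReal.toReal_sum (fun sa' _ => hpfin sa sa'), hp sa, ENNReal.toReal_one]
  apply ciSup_le
  intro sa
  apply _root_.le_of_forall_pos_le_add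
  intro ε hε
  -- choose near-optimal couplings
  have hchoice : ∀ sa', ∃ π : Measure (ℝ × ℝ), IsProbabilityMeasure π ∧
      π.map Prod.fst = Z₁ sa' ∧ π.map Prod.snd = Z₂ sa' ∧
      (∫ q, |q.1 - q.2| ∂π) < W1 (Z₁ sa') (Z₂ sa') + ε := by
    intro sa'
    haveI := h1 sa'; haveI := h2 sa'
    have hne : Set.Nonempty { x | ∃ π : Measure (ℝ × ℝ), IsProbabilityMeasure π ∧
        π.map Prod.fst = Z₁ sa' ∧ π.map Prod.snd = Z₂ sa' ∧ x = ∫ q, |q.1 - q.2| ∂π } :=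
      ⟨_, (Z₁ sa').prod (Z₂ sa'), inferInstance, by simp, by simp, rfl⟩
    have := exists_lt_of_csInf_lt hne
      (lt_add_of_pos_right (W1 (Z₁ sa') (Z₂ sa')) hε : W1 (Z₁ sa') (Z₂ sa') < _)
    obtain ⟨x, ⟨π, hπp, hπ1, hπ2, rfl⟩, hxlt⟩ := this
    exact ⟨π, hπp, hπ1, hπ2, hxlt⟩
  choose π hπp hπ1 hπ2 hπcost using hchoice
  set f : ℝ × ℝ → ℝ × ℝ := fun q => (r sa + γ * q.1, r sa + γ * q.2) with hfdef
  have hf : Measurable f := by fun_prop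
  set CC : Measure (ℝ × ℝ) := ∑ sa', (p sa sa') • ((π sa').map f) with hCCdef
  have hg : Measurable (fun q : ℝ × ℝ => |q.1 - q.2|) := by fun_prop
  have hgf : (fun q : ℝ × ℝ => |q.1 - q.2|) ∘ f = fun q : ℝ × ℝ => γ * |q.1 - q.2| := by
    funext q
    show |(r sa + γ * q.1) - (r sa + γ * q.2)| = γ * |q.1 - q.2|
    rw [show (r sa + γ * q.1) - (r sa + γ * q.2) = γ * (q.1 - q.2) by ring, abs_mul,
      abs_of_pos hγ0]
  -- integrability
  have hint : ∀ sa', Integrable (fun q : ℝ × ℝ => |q.1 - q.2|) (π sa') := by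
    intro sa'
    have hx : Integrable (fun q : ℝ × ℝ => q.1) (π sa') := by
      have h := hm1 sa'
      rw [← hπ1 sa'] at h
      exact (integrable_map_measure h.1 measurable_fst.aemeasurable).mp h
    have hy : Integrable (fun q : ℝ × ℝ => q.2) (π sa') := by
      have h := hm2 sa'
      rw [← hπ2 sa'] at h
      exact (integrable_map_measure h.1 measurable_snd.aemeasurable).mp h
    exact (hx.sub hy).abs
  have hintf : ∀ sa', Integrable (fun q : ℝ × ℝ => |q.1 - q.2|) ((π sa').map f) := by
    intro sa'
    rw [integrable_map_measure hg.aestronglyMeasurable hf.aemeasurable, hgf]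
    exact (hint sa').const_mul γ
  have hintCC : ∀ sa' ∈ Finset.univ, Integrable (fun q : ℝ × ℝ => |q.1 - q.2|)
      ((p sa sa') • ((π sa').map f)) := fun sa' _ => (hintf sa').smul_measure (hpfin sa sa')
  -- CC is a probability measure
  haveI hCCprob : IsProbabilityMeasure CC := by
    constructor
    rw [hCCdef, Measure.finset_sum_apply]
    have : ∀ sa', ((p sa sa') • ((π sa').map f)) Set.univ = p sa sa' := by
      intro sa'
      haveI := hπp sa'
      rw [Measure.smul_apply, Measure.map_apply hf MeasurableSet.univ, Set.preimage_univ,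
        measure_univ, smul_eq_mul, mul_one]
    simp only [this]
    exact hp sa
  -- marginals
  have hmfst : CC.map Prod.fst = T Z₁ sa := by
    rw [hT, hCCdef, map_finset_sum' _ _ measurable_fst]
    refine Finset.sum_congr rfl fun sa' _ => ?_
    rw [Measure.map_smul, Measure.map_map measurable_fst hf,
      show (Prod.fst ∘ f) = (fun x => r sa + γ * x) ∘ Prod.fst from rfl,
      ← Measure.map_map (by fun_prop) measurable_fst, hπ1 sa']
  have hmsnd : CC.map Prod.snd = T Z₂ sa := by
    rw [hT, hCCdef, map_finset_sum' _ _ measurable_snd]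
    refine Finset.sum_congr rfl fun sa' _ => ?_
    rw [Measure.map_smul, Measure.map_map measurable_snd hf,
      show (Prod.snd ∘ f) = (fun x => r sa + γ * x) ∘ Prod.snd from rfl,
      ← Measure.map_map (by fun_prop) measurable_snd, hπ2 sa']
  -- cost of CC
  have hcost : (∫ q, |q.1 - q.2| ∂CC) =
      ∑ sa', (p sa sa').toReal * (γ * ∫ q, |q.1 - q.2| ∂(π sa')) := by
    rw [hCCdef, integral_finset_sum_measure hintCC]
    refine Finset.sum_congr rfl fun sa' _ => ?_
    rw [integral_smul_measure, integral_map hf.aemeasurable hg.aestronglyMeasurable]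
    have : (fun q : ℝ × ℝ => |(f q).1 - (f q).2|) = fun q : ℝ × ℝ => γ * |q.1 - q.2| := hgf
    rw [this, MeasureTheory.integral_const_mul, smul_eq_mul]
  -- W1 of images bounded by cost of CC
  have hW1le : W1 (T Z₁ sa) (T Z₂ sa) ≤ ∫ q, |q.1 - q.2| ∂CC :=
    csInf_le (W1_bddBelow _ _) ⟨CC, hCCprob, hmfst, hmsnd, rfl⟩
  refine hW1le.trans ?_
  rw [hcost]
  have hstep : ∑ sa', (p sa sa').toReal * (γ * ∫ q, |q.1 - q.2| ∂(π sa')) ≤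
      ∑ sa', (p sa sa').toReal * (γ * (D + ε)) := by
    refine Finset.sum_le_sum fun sa' _ => ?_
    refine mul_le_mul_of_nonneg_left ?_ toReal_nonneg
    refine mul_le_mul_of_nonneg_left ?_ hγ0.le
    exact ((hπcost sa').trans_le (add_le_add_left (hWD sa') ε)).le
  refine hstep.trans ?_
  rw [← Finset.sum_mul, hpsum sa, one_mul]
  nlinarith [hε.le]
end
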